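/- Let d be a positive integer, μ > 0, G ≥ 0, and f : ℝ^d → ℝ a differentiable function that is μ-strongly convex with minimizer w* (∇f(w*) = 0). Let (w_t)_{t≥1} be a stochastic process with w_{t+1} = w_t − γ_t g_t where γ_t = 1/(μ t), and where each stochastic gradient g_t satisfies E[g_t | w_1, g_1, …, g_{t−1}] = ∇f(w_t) and E[‖g_t‖₂² | w_1, g_1, …, g_{t−1}] ≤ G². Then for every t ≥ 2, E[‖w_t − w*‖₂²] ≤ 4G² / (μ² t). -/

import Mathlib

/-!
Expanding the square in `w (t+1) - w* = (w t - w*) - γ_t • g t` and taking expectations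
gives `E‖w (t+1) - w*‖² ≤ (1 - 2 γ_t μ) E‖w t - w*‖² + γ_t² G²`: by the pull-out property of
the conditional expectation, `E⟪w t - w*, g t⟫ = E⟪w t - w*, ∇f (w t)⟫`, and strong convexity
together with `∇f w* = 0` bounds the latter below by `μ E‖w t - w*‖²`. For `γ_t = 1/(μt)` this
is the recursion `a (t+1) ≤ (1 - 2/t) a t + G²/(μ²t²)`, which gives `a t ≤ 4G²/(μ²t)` by
induction from `t = 2`. If `w 1 - w*` is not square integrable then neither is any `w t - w*`,
and all the integrals take the junk value `0`.
-/

open MeasureTheory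
open scoped RealInnerProductSpace

theorem le_four_mul_div_of_recursion {a : ℕ → ℝ} {c : ℝ} (hc : 0 ≤ c) (ha1 : 0 ≤ a 1)
    (hrec : ∀ t : ℕ, 1 ≤ t → a (t + 1) ≤ (1 - 2 / t) * a t + c / t ^ 2) :
    ∀ t : ℕ, 2 ≤ t → a t ≤ 4 * c / t := by
  intro t ht
  induction t, ht using Nat.le_induction with
  | base =>
    have h := hrec 1 le_rfl
    norm_num at h ⊢
    linarith
  | succ t ht ih =>
    have ht' : (2 : ℝ) ≤ t := by exact_mod_cast ht
    have hcoef : 0 ≤ 1 - 2 / (t : ℝ) := by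
      rw [sub_nonneg, div_le_one (by linarith)]; exact ht'
    calc a (t + 1) ≤ (1 - 2 / t) * a t + c / t ^ 2 := hrec t (by omega)
      _ ≤ (1 - 2 / t) * (4 * c / t) + c / t ^ 2 := by gcongr
      _ = (4 * t - 7) * c / t ^ 2 := by field_simp; ring
      _ ≤ 4 * c / (t + 1) := by
        rw [div_le_div_iff₀ (by positivity) (by positivity)]
        nlinarith [mul_nonneg hc (by linarith : (0 : ℝ) ≤ 3 * t + 7)]
      _ = 4 * c / ↑(t + 1) := by push_cast; rfl

section StrongConvexity

variable {E : Type*} [NormedAddCommGroup E] [InnerProductSpace ℝ E] [CompleteSpace E]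

theorem mul_norm_sub_sq_le_inner_gradient {f : E → ℝ} {mu : ℝ}
    (hconv : ∀ x y, f y ≥ f x + ⟪gradient f x, y - x⟫ + mu / 2 * ‖y - x‖ ^ 2)
    {xstar : E} (hmin : gradient f xstar = 0) (x : E) :
    mu * ‖x - xstar‖ ^ 2 ≤ ⟪x - xstar, gradient f x⟫ := by
  have h₁ := hconv x xstar
  have h₂ := hconv xstar x
  rw [hmin, inner_zero_left] at h₂
  rw [← neg_sub x xstar, inner_neg_right, norm_neg, real_inner_comm] at h₁
  linarith

end StrongConvexity

namespace MeasureTheory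

variable {Ω : Type*} {m m0 : MeasurableSpace Ω} {P : Measure Ω}

theorem memLp_iff_memLp_one_of_sub_smul {F : Type*} [NormedAddCommGroup F] [NormedSpace ℝ F]
    {p : ENNReal} {X g : ℕ → Ω → F} {c : ℕ → ℝ} (hg : ∀ t, 1 ≤ t → MemLp (g t) p P)
    (hstep : ∀ t, 1 ≤ t → ∀ ω, X (t + 1) ω = X t ω - c t • g t ω) :
    ∀ t, 1 ≤ t → (MemLp (X t) p P ↔ MemLp (X 1) p P) := by
  intro t ht
  induction t, ht using Nat.le_induction with
  | base => rfl
  | succ t ht ih =>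
    have hcg := (hg t ht).const_smul (c t)
    rw [show X (t + 1) = X t - c t • g t from funext (hstep t ht), ← ih]
    exact ⟨fun h => by simpa using h.add hcg, fun h => h.sub hcg⟩

theorem integral_norm_sq_eq_zero_of_not_memLp {F : Type*} [NormedAddCommGroup F] {X : Ω → F}
    (hX : AEStronglyMeasurable X P) (hX2 : ¬MemLp X 2 P) : ∫ ω, ‖X ω‖ ^ 2 ∂P = 0 :=
  integral_undef (mt (memLp_two_iff_integrable_sq_norm hX).2 hX2)

theorem integral_le_of_condExp_le [IsProbabilityMeasure P] (hm : m ≤ m0) {φ : Ω → ℝ} {C : ℝ}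
    (hφC : ∀ᵐ ω ∂P, P[φ|m] ω ≤ C) : ∫ ω, φ ω ∂P ≤ C := by
  rw [← integral_condExp hm]
  simpa using integral_mono_ae integrable_condExp (integrable_const C) hφC

variable {E : Type*} [NormedAddCommGroup E] [InnerProductSpace ℝ E]

theorem MemLp.integrable_inner {X Y : Ω → E} (hX : MemLp X 2 P) (hY : MemLp Y 2 P) :
    Integrable (fun ω => ⟪X ω, Y ω⟫) P :=
  memLp_one_iff_integrable.1 ((innerSL ℝ).memLp_of_bilin 1 hX hY)

variable [CompleteSpace E]

theorem mul_integral_norm_sq_le_integral_inner [IsFiniteMeasure P] (hm : m ≤ m0)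
    {X g h : Ω → E} {mu : ℝ} (hX : StronglyMeasurable[m] X)
    (hX2 : Integrable (fun ω => ‖X ω‖ ^ 2) P) (hg : Integrable g P)
    (hXg : Integrable (fun ω => ⟪X ω, g ω⟫) P) (hcond : P[g|m] =ᵐ[P] h)
    (hcoercive : ∀ ω, mu * ‖X ω‖ ^ 2 ≤ ⟪X ω, h ω⟫) :
    mu * ∫ ω, ‖X ω‖ ^ 2 ∂P ≤ ∫ ω, ⟪X ω, g ω⟫ ∂P := by
  have hpull : P[fun ω => ⟪X ω, g ω⟫|m] =ᵐ[P] fun ω => ⟪X ω, P[g|m] ω⟫ :=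
    condExp_bilin_of_stronglyMeasurable_left (innerSL ℝ) hX hXg hg
  have hcoercive_ae : ∀ᵐ ω ∂P, mu * ‖X ω‖ ^ 2 ≤ P[fun ω => ⟪X ω, g ω⟫|m] ω := by
    filter_upwards [hpull, hcond] with ω hpull hcond
    rw [hpull, hcond]
    exact hcoercive ω
  calc mu * ∫ ω, ‖X ω‖ ^ 2 ∂P = ∫ ω, mu * ‖X ω‖ ^ 2 ∂P := (integral_const_mul _ _).symm
    _ ≤ ∫ ω, P[fun ω => ⟪X ω, g ω⟫|m] ω ∂P :=
      integral_mono_ae (hX2.const_mul mu) integrable_condExp hcoercive_ae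
    _ = ∫ ω, ⟪X ω, g ω⟫ ∂P := integral_condExp hm

theorem integral_norm_sub_smul_sq_le [IsProbabilityMeasure P] (hm : m ≤ m0)
    {X g h : Ω → E} {mu γ C : ℝ} (hγ : 0 ≤ γ) (hX : StronglyMeasurable[m] X)
    (hX2 : MemLp X 2 P) (hg2 : MemLp g 2 P) (hcond : P[g|m] =ᵐ[P] h)
    (hcoercive : ∀ ω, mu * ‖X ω‖ ^ 2 ≤ ⟪X ω, h ω⟫)
    (hgC : ∀ᵐ ω ∂P, P[fun ω => ‖g ω‖ ^ 2|m] ω ≤ C) :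
    ∫ ω, ‖X ω - γ • g ω‖ ^ 2 ∂P ≤ (1 - 2 * γ * mu) * ∫ ω, ‖X ω‖ ^ 2 ∂P + γ ^ 2 * C := by
  have hXsq := (memLp_two_iff_integrable_sq_norm hX2.1).1 hX2
  have hgsq := (memLp_two_iff_integrable_sq_norm hg2.1).1 hg2
  have hXg := hX2.integrable_inner hg2
  have hexpand : ∀ ω, ‖X ω - γ • g ω‖ ^ 2
      = ‖X ω‖ ^ 2 - 2 * γ * ⟪X ω, g ω⟫ + γ ^ 2 * ‖g ω‖ ^ 2 := by
    intro ω
    rw [norm_sub_sq_real, real_inner_smul_right, norm_smul, mul_pow, Real.norm_eq_abs, sq_abs]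
    ring
  have hfirst : Integrable (fun ω => ‖X ω‖ ^ 2 - 2 * γ * ⟪X ω, g ω⟫) P :=
    hXsq.sub (hXg.const_mul _)
  simp_rw [hexpand]
  rw [integral_add hfirst (hgsq.const_mul _), integral_sub hXsq (hXg.const_mul _),
    integral_const_mul, integral_const_mul]
  have hdescent := mul_integral_norm_sq_le_integral_inner hm hX hXsq
    (hg2.integrable one_le_two) hXg hcond hcoercive
  have hmoment := integral_le_of_condExp_le hm hgC
  nlinarith [mul_le_mul_of_nonneg_left hdescent hγ,
    mul_le_mul_of_nonneg_left hmoment (sq_nonneg γ)]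

end MeasureTheory

theorem stmt_10_general {Ω : Type*} {m0 : MeasurableSpace Ω} (P : Measure Ω)
    [IsProbabilityMeasure P]
    (d : ℕ) (mu G : ℝ) (hmu : 0 < mu)
    (f : EuclideanSpace ℝ (Fin d) → ℝ)
    (hconv : ∀ x y : EuclideanSpace ℝ (Fin d),
      f y ≥ f x + ⟪gradient f x, y - x⟫ + mu / 2 * ‖y - x‖ ^ 2)
    (wstar : EuclideanSpace ℝ (Fin d)) (hmin : gradient f wstar = 0)
    (ℱ : Filtration ℕ m0)
    (w g : ℕ → Ω → EuclideanSpace ℝ (Fin d))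
    (hadapt : Adapted ℱ w)
    (hupd : ∀ t, 1 ≤ t → ∀ ω, w (t + 1) ω = w t ω - (1 / (mu * t)) • g t ω)
    (hgint : ∀ t, 1 ≤ t → Integrable (g t) P)
    (hg2int : ∀ t, 1 ≤ t → Integrable (fun ω => ‖g t ω‖ ^ 2) P)
    (hgcond : ∀ t, 1 ≤ t → P[g t | ℱ t] =ᵐ[P] fun ω => gradient f (w t ω))
    (hg2cond : ∀ t, 1 ≤ t → ∀ᵐ ω ∂P, (P[fun ω' => ‖g t ω'‖ ^ 2 | ℱ t]) ω ≤ G ^ 2) :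
    ∀ t, 2 ≤ t → ∫ ω, ‖w t ω - wstar‖ ^ 2 ∂P ≤ 4 * G ^ 2 / (mu ^ 2 * t) := by
  have hX : ∀ t, StronglyMeasurable[ℱ t] fun ω => w t ω - wstar :=
    fun t => (hadapt t).stronglyMeasurable.sub stronglyMeasurable_const
  have hg : ∀ t, 1 ≤ t → MemLp (g t) 2 P :=
    fun t ht => (memLp_two_iff_integrable_sq_norm (hgint t ht).1).2 (hg2int t ht)
  have hstep : ∀ t, 1 ≤ t → ∀ ω,
      w (t + 1) ω - wstar = (w t ω - wstar) - (1 / (mu * t)) • g t ω :=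
    fun t ht ω => by rw [hupd t ht ω, sub_right_comm]
  have hmemLp := memLp_iff_memLp_one_of_sub_smul (X := fun t ω => w t ω - wstar) hg hstep
  intro t ht
  by_cases h1 : MemLp (fun ω => w 1 ω - wstar) 2 P
  · have hrec : ∀ s : ℕ, 1 ≤ s → ∫ ω, ‖w (s + 1) ω - wstar‖ ^ 2 ∂P
        ≤ (1 - 2 / s) * ∫ ω, ‖w s ω - wstar‖ ^ 2 ∂P + G ^ 2 / mu ^ 2 / s ^ 2 := by
      intro s hs
      have hspos : (0 : ℝ) < s := by exact_mod_cast hs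
      simp only [hstep s hs]
      convert integral_norm_sub_smul_sq_le (mu := mu) (γ := 1 / (mu * s)) (C := G ^ 2)
        (ℱ.le s) (by positivity) (hX s) ((hmemLp s hs).2 h1) (hg s hs) (hgcond s hs)
        (fun ω => mul_norm_sub_sq_le_inner_gradient hconv hmin (w s ω)) (hg2cond s hs)
        using 2 <;> field_simp
    calc ∫ ω, ‖w t ω - wstar‖ ^ 2 ∂P ≤ 4 * (G ^ 2 / mu ^ 2) / t :=
          le_four_mul_div_of_recursion (a := fun t => ∫ ω, ‖w t ω - wstar‖ ^ 2 ∂P)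
            (by positivity) (integral_nonneg fun _ => sq_nonneg _) hrec t ht
      _ = 4 * G ^ 2 / (mu ^ 2 * t) := by rw [mul_div_assoc', div_div]
  · rw [integral_norm_sq_eq_zero_of_not_memLp ((hX t).mono (ℱ.le t)).aestronglyMeasurable
      (mt (hmemLp t (by omega)).1 h1)]
    positivity

/-- O(1/t) convergence of SGD with step sizes `γ_t = 1/(μt)` on a
μ-strongly convex objective: if `E[g_t | history] = ∇f(w_t)` and
`E[‖g_t‖₂² | history] ≤ G²`, then `E[‖w_t − w*‖₂²] ≤ 4G²/(μ²t)` for all `t ≥ 2`.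
The history σ-algebras are modelled by a filtration `ℱ` to which the iterates are
adapted. -/
theorem stmt_10 {Ω : Type*} {m0 : MeasurableSpace Ω} (P : Measure Ω)
    [IsProbabilityMeasure P]
    (d : ℕ) (hd : 0 < d) (mu G : ℝ) (hmu : 0 < mu) (hG : 0 ≤ G)
    (f : EuclideanSpace ℝ (Fin d) → ℝ) (hdiff : Differentiable ℝ f)
    (hconv : ∀ x y : EuclideanSpace ℝ (Fin d),
      f y ≥ f x + ⟪gradient f x, y - x⟫ + mu / 2 * ‖y - x‖ ^ 2)
    (wstar : EuclideanSpace ℝ (Fin d)) (hmin : gradient f wstar = 0)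
    (ℱ : Filtration ℕ m0)
    (w g : ℕ → Ω → EuclideanSpace ℝ (Fin d))
    (hadapt : Adapted ℱ w)
    (hgmeas : ∀ t, StronglyMeasurable (g t))
    (hupd : ∀ t, 1 ≤ t → ∀ ω, w (t + 1) ω = w t ω - (1 / (mu * t)) • g t ω)
    (hgint : ∀ t, 1 ≤ t → Integrable (g t) P)
    (hg2int : ∀ t, 1 ≤ t → Integrable (fun ω => ‖g t ω‖ ^ 2) P)
    (hgcond : ∀ t, 1 ≤ t → P[g t | ℱ t] =ᵐ[P] fun ω => gradient f (w t ω))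
    (hg2cond : ∀ t, 1 ≤ t → ∀ᵐ ω ∂P, (P[fun ω' => ‖g t ω'‖ ^ 2 | ℱ t]) ω ≤ G ^ 2) :
    ∀ t, 2 ≤ t → ∫ ω, ‖w t ω - wstar‖ ^ 2 ∂P ≤ 4 * G ^ 2 / (mu ^ 2 * t) :=
  stmt_10_general P d mu G hmu f hconv wstar hmin ℱ w g hadapt hupd hgint hg2int hgcond hg2cond
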